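/- arXiv:1301.0040 — 2 statements merged into one kernel-verified Lean document; each statement's English description precedes it below -/
import Mathlib

section
/- For the timed finite automaton A (child automaton of the parallel timing system S₃), the maximum delay δ_A equals 25: every timed word accepted by A has duration strictly less than 25, and for every ε > 0 there is a timed word accepted by A of duration greater than 25 − ε. -/
/-- A transition of a timed automaton: source state, alphabet symbol, destination state,
the list of timers reset (to 0) when the transition is taken, and the conjunction of
constraints `x < c` (represented as pairs `(x, c)`) that must hold for the transition
to be taken. -/
structure TTrans (A Q K : Type) where
  src : Q
  sym : A
  dst : Q
  resets : List K
  constraints : List (K × ℝ)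

/-- One step of a timed automaton with transition list `trs`, from state `q` to state `q'`,
reading symbol `a` at time `t`.  A timer valuation `v` records, for each timer, the timestamp
at which it was last reset (so the current value of timer `k` at time `t` is `t - v k`).
Every constraint `x < c` on the chosen transition must be satisfied, and the transition's
reset timers get reset time `t` in the new valuation `v'`. -/
def TStep {A Q K : Type} (trs : List (TTrans A Q K)) (q : Q) (v : K → ℝ)
    (a : A) (t : ℝ) (q' : Q) (v' : K → ℝ) : Prop :=
  ∃ tr ∈ trs, tr.src = q ∧ tr.sym = a ∧ tr.dst = q' ∧
    (∀ c ∈ tr.constraints, t - v c.1 < c.2) ∧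
    (∀ k, (k ∈ tr.resets → v' k = t) ∧ (k ∉ tr.resets → v' k = v k))

/-- `TRun trs q v w qs`: starting in state `q` with timer valuation `v`, the automaton can
read the finite timed word `w`, visiting exactly the sequence of states `qs`
(`qs` starts with `q` and has length `w.length + 1`). -/
inductive TRun {A Q K : Type} (trs : List (TTrans A Q K)) :
    Q → (K → ℝ) → List (A × ℝ) → List Q → Prop
  | nil (q : Q) (v : K → ℝ) : TRun trs q v [] [q]
  | cons {q : Q} {v : K → ℝ} {a : A} {t : ℝ} {q' : Q} {v' : K → ℝ}
      {w : List (A × ℝ)} {qs : List Q} :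
      TStep trs q v a t q' v' → TRun trs q' v' w qs →
      TRun trs q v ((a, t) :: w) (q :: qs)

/-- The timestamps of a timed word are strictly increasing. -/
def Increasing {A : Type} (w : List (A × ℝ)) : Prop :=
  w.Chain' fun p q => p.2 < q.2

/-- Timestamp of the first symbol of a timed word (0 for the empty word). -/
def firstTime {A : Type} (w : List (A × ℝ)) : ℝ := (w.map Prod.snd).headD 0

/-- Timestamp of the last symbol of a timed word (0 for the empty word). -/
def lastTime {A : Type} (w : List (A × ℝ)) : ℝ := (w.map Prod.snd).getLastD 0

/-- The duration of a timed word: last timestamp minus first timestamp. -/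
def duration {A : Type} (w : List (A × ℝ)) : ℝ := lastTime w - firstTime w

/-- A timed finite automaton: a start state, an accepting state and a finite
list of transitions. -/
structure TFA (A Q K : Type) where
  start : Q
  accept : Q
  trans : List (TTrans A Q K)

/-- A TFA accepts a (nonempty, strictly increasing) finite timed word if some run from the
start state — with all timers initially 0 at the time of the first transition — reads the
whole word and ends in the accepting state. -/
def TFA.Accepts {A Q K : Type} (M : TFA A Q K) (w : List (A × ℝ)) : Prop :=
  w ≠ [] ∧ Increasing w ∧
  ∃ qs : List Q, TRun M.trans M.start (fun _ => firstTime w) w qs ∧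
    qs.getLast? = some M.accept

/-- A timed Büchi automaton: a start state, a set of accepting states and a finite
list of transitions. -/
structure TBA (A Q K : Type) where
  start : Q
  accept : Set Q
  trans : List (TTrans A Q K)

/-- A TBA accepts an infinite timed word `(σ, τ)` (with strictly increasing timestamps)
if some infinite run from the start state — all timers 0 at the time `τ 0` of the first
transition — visits an accepting state infinitely often. -/
def TBA.Accepts {A Q K : Type} (M : TBA A Q K) (σ : ℕ → A) (τ : ℕ → ℝ) : Prop :=
  StrictMono τ ∧
  ∃ (ρ : ℕ → Q) (v : ℕ → K → ℝ),
    ρ 0 = M.start ∧ v 0 = (fun _ => τ 0) ∧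
    (∀ i, TStep M.trans (ρ i) (v i) (σ i) (τ i) (ρ (i + 1)) (v (i + 1))) ∧
    (∀ n, ∃ m, n ≤ m ∧ ρ m ∈ M.accept)

/-- `u` is a subword over the finite path `p` of TBA `M` if the transitions of `u` are taken
consecutively, traversing exactly the states of `p`, within some (finite prefix of a) run of
`M` from its start state, all timer constraints along the run being satisfied. -/
def TBA.SubwordOver {A Q K : Type} (M : TBA A Q K) (p : List Q) (u : List (A × ℝ)) : Prop :=
  ∃ (w₀ : List (A × ℝ)) (qs₀ : List Q),
    qs₀.length = w₀.length ∧
    Increasing (w₀ ++ u) ∧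
    TRun M.trans M.start (fun _ => firstTime (w₀ ++ u)) (w₀ ++ u) (qs₀ ++ p)

/-- The maximum delay `Δ_M(p)` along a path `p`: the supremum of the durations of all
subwords over `p`. -/
noncomputable def TBA.maxDelay {A Q K : Type} (M : TBA A Q K) (p : List Q) : ℝ :=
  sSup {d : ℝ | ∃ u, M.SubwordOver p u ∧ duration u = d}
/-- The child TFA A of the parallel timing system S₃, over the alphabet {0, 1}
(encoded in ℕ): states β₁ = 0 (start), …, β₇ = 6 (accepting), two timers U = 0 and
V = 1, and transitions β₁→β₂ on 0 resetting U; β₂→β₃ on 0; β₃→β₄ on 0; β₄→β₇ on 0 with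
constraint U < 10; β₂→β₅ on 1; β₅→β₄ on 0; β₅→β₆ on 1 with constraint U < 20, resetting
V; β₆→β₇ on 1 with constraint V < 5. -/
def childA : TFA ℕ ℕ (Fin 2) :=
  { start := 0, accept := 6,
    trans := [⟨0, 0, 1, [0], []⟩,
              ⟨1, 0, 2, [], []⟩,
              ⟨2, 0, 3, [], []⟩,
              ⟨3, 0, 6, [], [(0, 10)]⟩,
              ⟨1, 1, 4, [], []⟩,
              ⟨4, 0, 3, [], []⟩,
              ⟨4, 1, 5, [1], [(0, 20)]⟩,
              ⟨5, 1, 6, [], [(1, 5)]⟩] }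

/-!
Timer U is reset by the first symbol, and an accepting run follows β₁β₂β₃β₄β₇, β₁β₂β₅β₄β₇ or
β₁β₂β₅β₆β₇. On the first two paths the last symbol comes while U < 10; on the third, the third
symbol comes while U < 20 and resets V, and the last one while V < 5. Hence every accepted word
ends less than max 10 (20 + 5) = 25 time units after its first symbol; formally, each state
carries a deadline that no transition increases. Conversely, the word read along the third path
at times 0, s, 20 - s, 25 - 2s is accepted for every 0 < s < 5.
-/

theorem lastTime_cons_of_ne_nil {A : Type} (p : A × ℝ) {w : List (A × ℝ)} (hw : w ≠ []) :
    lastTime (p :: w) = lastTime w := by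
  obtain ⟨p', w', rfl⟩ := List.exists_cons_of_ne_nil hw
  rfl

theorem duration_cons_of_ne_nil {A : Type} (p : A × ℝ) {w : List (A × ℝ)} (hw : w ≠ []) :
    duration (p :: w) = lastTime w - p.2 := by
  rw [duration, lastTime_cons_of_ne_nil p hw]
  rfl

section Deadline

variable {A Q K : Type} {trs : List (TTrans A Q K)}

theorem TRun.states_ne_nil {q : Q} {v : K → ℝ} {w : List (A × ℝ)} {qs : List Q}
    (h : TRun trs q v w qs) : qs ≠ [] := by
  cases h <;> simp

theorem TRun.lastTime_lt_of_deadline {f : Q} {S : Set Q} (D : Q → (K → ℝ) → ℝ) (hf : f ∉ S)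
    (hstuck : ∀ v a t q' v', ¬ TStep trs f v a t q' v')
    (hstep : ∀ q ∈ S, ∀ v a t q' v', TStep trs q v a t q' v' →
      (q' = f → t < D q v) ∧ (q' ≠ f → q' ∈ S ∧ D q' v' ≤ D q v))
    {q : Q} {v : K → ℝ} {w : List (A × ℝ)} {qs : List Q} (hrun : TRun trs q v w qs)
    (hq : q ∈ S) (hlast : qs.getLast? = some f) : lastTime w < D q v := by
  induction hrun with
  | nil q v =>
    obtain rfl : q = f := by simpa using hlast
    exact absurd hq hf
  | @cons q v a t q' v' w qs hs hrest ih =>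
    have hbound := hstep q hq v a t q' v' hs
    cases hrest with
    | nil =>
      obtain rfl : q' = f := by simpa using hlast
      exact hbound.1 rfl
    | cons hs' _ =>
      have hq' : q' ≠ f := by rintro rfl; exact hstuck _ _ _ _ _ hs'
      obtain ⟨hq'S, hD⟩ := hbound.2 hq'
      rw [lastTime_cons_of_ne_nil _ (List.cons_ne_nil _ _)]
      exact (ih hq'S (by simpa using hlast)).trans_le hD

end Deadline

theorem TStep.of_mem {A Q K : Type} [DecidableEq K] {trs : List (TTrans A Q K)}
    {tr : TTrans A Q K} (htr : tr ∈ trs) {v : K → ℝ} {t : ℝ}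
    (hc : ∀ c ∈ tr.constraints, t - v c.1 < c.2) :
    TStep trs tr.src v tr.sym t tr.dst (fun k => if k ∈ tr.resets then t else v k) :=
  ⟨tr, htr, rfl, rfl, rfl, hc, fun _ => ⟨fun hk => if_pos hk, fun hk => if_neg hk⟩⟩

/-- The latest time at which the accepting state of `childA` can still be reached from state
`q` under valuation `v`. -/
def childADeadline (q : ℕ) (v : Fin 2 → ℝ) : ℝ :=
  match q with
  | 1 | 4 => v 0 + 25
  | 2 | 3 => v 0 + 10
  | _ => v 1 + 5

section Steps

variable {v v' : Fin 2 → ℝ} {a : ℕ} {t : ℝ} {q q' : ℕ}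

theorem childA_step_start (h : TStep childA.trans 0 v a t q' v') : q' = 1 ∧ v' 0 = t := by
  obtain ⟨tr, htr, hsrc, -, hdst, -, hr⟩ := h
  simp only [childA, List.mem_cons, List.not_mem_nil, or_false] at htr
  rcases htr with rfl | rfl | rfl | rfl | rfl | rfl | rfl | rfl <;> simp_all

theorem childA_not_step_accept : ¬ TStep childA.trans 6 v a t q' v' := by
  rintro ⟨tr, htr, hsrc, -⟩
  simp only [childA, List.mem_cons, List.not_mem_nil, or_false] at htr
  rcases htr with rfl | rfl | rfl | rfl | rfl | rfl | rfl | rfl <;> simp_all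

theorem childA_step_deadline (hq : q ∈ Set.Icc 1 5) (h : TStep childA.trans q v a t q' v') :
    (q' = 6 → t < childADeadline q v) ∧
      (q' ≠ 6 → q' ∈ Set.Icc 1 5 ∧ childADeadline q' v' ≤ childADeadline q v) := by
  obtain ⟨tr, htr, rfl, -, rfl, hc, hr⟩ := h
  simp only [childA, List.mem_cons, List.not_mem_nil, or_false] at htr
  rcases htr with rfl | rfl | rfl | rfl | rfl | rfl | rfl | rfl <;>
    simp_all [childADeadline] <;> linarith

end Steps

theorem childA_duration_lt_of_accepts {w : List (ℕ × ℝ)} (hw : childA.Accepts w) :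
    duration w < 25 := by
  obtain ⟨hne, -, qs, hrun, hlast⟩ := hw
  cases hrun with
  | nil => exact absurd rfl hne
  | @cons _ _ _ t q' v' w' _ hs hrest =>
    obtain ⟨rfl, hv'⟩ := childA_step_start hs
    rcases eq_or_ne w' [] with rfl | hw'
    · simp [duration, lastTime, firstTime]
    have hlast' : lastTime w' < childADeadline 1 v' :=
      hrest.lastTime_lt_of_deadline childADeadline (by simp)
        (fun _ _ _ _ _ ↦ childA_not_step_accept) (fun _ hq _ _ _ _ _ ↦ childA_step_deadline hq)
        (by simp)
        (by rwa [List.getLast?_cons_of_ne_nil hrest.states_ne_nil] at hlast)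
    rw [duration_cons_of_ne_nil _ hw']
    simp only [childADeadline, hv'] at hlast'
    linarith

def childAWitness (s : ℝ) : List (ℕ × ℝ) := [(0, 0), (1, s), (1, 20 - s), (1, 25 - 2 * s)]

theorem duration_childAWitness (s : ℝ) : duration (childAWitness s) = 25 - 2 * s := by
  simp [childAWitness, duration, lastTime, firstTime]

theorem childA_accepts_witness {s : ℝ} (hs₀ : 0 < s) (hs₅ : s < 5) :
    childA.Accepts (childAWitness s) := by
  refine ⟨List.cons_ne_nil _ _, ?_, [0, 1, 4, 5, 6], ?_, rfl⟩
  · refine List.IsChain.cons_cons ?_ (.cons_cons ?_ (.cons_cons ?_ (.singleton _))) <;>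
      dsimp only <;> linarith
  refine .cons (TStep.of_mem (tr := ⟨0, 0, 1, [0], []⟩) (by simp [childA]) (by simp)) <|
    .cons (TStep.of_mem (tr := ⟨1, 1, 4, [], []⟩) (by simp [childA]) (by simp)) <|
    .cons (TStep.of_mem (tr := ⟨4, 1, 5, [1], [(0, 20)]⟩) (by simp [childA]) ?_) <|
    .cons (TStep.of_mem (tr := ⟨5, 1, 6, [], [(1, 5)]⟩) (by simp [childA]) ?_) <| .nil _ _
  · simpa [firstTime] using hs₀
  · simp only [Fin.isValue, List.mem_cons, List.not_mem_nil, or_false, ↓reduceIte, forall_eq]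
    linarith

/-- The maximum delay δ_A of the child TFA A equals 25: every accepted timed word has
duration < 25, and for every ε > 0 some accepted timed word has duration > 25 - ε. -/
theorem childA_maxDelay :
    (∀ w, childA.Accepts w → duration w < 25) ∧
    (∀ ε : ℝ, 0 < ε → ∃ w, childA.Accepts w ∧ 25 - ε < duration w) := by
  refine ⟨fun _ hw ↦ childA_duration_lt_of_accepts hw, fun ε hε ↦ ?_⟩
  obtain ⟨s, hs₀, hs⟩ := exists_between (lt_min (by norm_num : (0 : ℝ) < 5) (half_pos hε))
  refine ⟨childAWitness s, childA_accepts_witness hs₀ (hs.trans_le (min_le_left _ _)), ?_⟩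
  rw [duration_childAWitness]
  linarith [min_le_right (5 : ℝ) (ε / 2)]
end

section
/- For the parent timed Büchi automaton P of the matrix-multiplication parallel timing system and the path ρ₁ = ⟨s₃, s₄, s₅, s₆, s₇, s₈, s₉, s₁₀, s₁₁, s₁₂, s₀⟩, the maximum delay Δ_P(ρ₁) equals 8.1 (milliseconds): every subword over ρ₁ has duration strictly less than 8.1, and for every ε > 0 there is a subword over ρ₁ of duration greater than 8.1 − ε. -/
/-- The parent TBA P of the matrix-multiplication parallel timing system: 13 states
s₀ = 0, …, s₁₂ = 12 forming a single cycle, with start state s₀ and accepting set {s₁};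
transitions eᵢ : s_{i-1} → sᵢ (i = 1,…,12) and e₁₃ : s₁₂ → s₀, each carrying a distinct
symbol (symbol `i - 1` on eᵢ); 12 timers t₁ = 0, …, t₁₂ = 11 with bounds
(c₁,…,c₁₂) = (0.2, 0.3, 0.3, 0.2, 0.3, 0.3, 0.2, 0.3, 0.3, 1, 1.5, 4) ms: eᵢ resets tᵢ
for i = 1,…,12, e₁ carries no constraint, and eᵢ carries the single constraint
`t_{i-1} < c_{i-1}` for i = 2,…,13. -/
def Pmm : TBA ℕ ℕ ℕ :=
  { start := 0, accept := {1},
    trans := [⟨0, 0, 1, [0], []⟩,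
              ⟨1, 1, 2, [1], [(0, 0.2)]⟩,
              ⟨2, 2, 3, [2], [(1, 0.3)]⟩,
              ⟨3, 3, 4, [3], [(2, 0.3)]⟩,
              ⟨4, 4, 5, [4], [(3, 0.2)]⟩,
              ⟨5, 5, 6, [5], [(4, 0.3)]⟩,
              ⟨6, 6, 7, [6], [(5, 0.3)]⟩,
              ⟨7, 7, 8, [7], [(6, 0.2)]⟩,
              ⟨8, 8, 9, [8], [(7, 0.3)]⟩,
              ⟨9, 9, 10, [9], [(8, 0.3)]⟩,
              ⟨10, 10, 11, [10], [(9, 1)]⟩,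
              ⟨11, 11, 12, [11], [(10, 1.5)]⟩,
              ⟨12, 12, 0, [], [(11, 4)]⟩] }

theorem TRun.exists_of_append {A Q K : Type} {trs : List (TTrans A Q K)} {q : Q} {v : K → ℝ}
    {w₁ w₂ : List (A × ℝ)} {qs₁ qs₂ : List Q}
    (h : TRun trs q v (w₁ ++ w₂) (qs₁ ++ qs₂)) (hlen : qs₁.length = w₁.length) :
    ∃ q' v', TRun trs q' v' w₂ qs₂ := by
  induction w₁ generalizing q v qs₁ with
  | nil => exact ⟨q, v, by rwa [List.eq_nil_of_length_eq_zero hlen] at h⟩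
  | cons _ w₁ ih =>
    obtain _ | ⟨_, qs₁⟩ := qs₁
    · simp at hlen
    · cases h with
      | cons _ hrun => exact ih hrun (by simpa using hlen)

theorem TBA.SubwordOver.exists_run {A Q K : Type} {M : TBA A Q K} {p : List Q}
    {u : List (A × ℝ)} (h : M.SubwordOver p u) : ∃ q v, TRun M.trans q v u p := by
  obtain ⟨_, _, hlen, -, hrun⟩ := h
  exact hrun.exists_of_append hlen

theorem TStep.inv_of_nodup_src {A Q K : Type} {trs : List (TTrans A Q K)}
    (hnd : (trs.map TTrans.src).Nodup) {tr : TTrans A Q K} (htr : tr ∈ trs)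
    {v v' : K → ℝ} {a : A} {t : ℝ} {q' : Q} (h : TStep trs tr.src v a t q' v') :
    q' = tr.dst ∧ (∀ c ∈ tr.constraints, t - v c.1 < c.2) ∧ ∀ k ∈ tr.resets, v' k = t := by
  obtain ⟨tr', htr', hsrc, -, rfl, hc, hres⟩ := h
  obtain rfl := List.inj_on_of_nodup_map hnd htr' htr hsrc
  exact ⟨rfl, hc, fun k hk => (hres k).1 hk⟩

theorem Pmm_trans_map_src_nodup : (Pmm.trans.map TTrans.src).Nodup := by
  simp [Pmm]

theorem Pmm_trans_src : ∀ q (hq : q < 13), (Pmm.trans[q]'hq).src = q := by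
  decide

theorem Pmm_step_inv {q : ℕ} (hq : q < 13) {v v' : ℕ → ℝ} {a : ℕ} {t : ℝ} {q' : ℕ}
    (h : TStep Pmm.trans q v a t q' v') :
    q' = (Pmm.trans[q]'hq).dst ∧ (∀ c ∈ (Pmm.trans[q]'hq).constraints, t - v c.1 < c.2) ∧
      ∀ k ∈ (Pmm.trans[q]'hq).resets, v' k = t :=
  TStep.inv_of_nodup_src Pmm_trans_map_src_nodup (List.getElem_mem hq) (Pmm_trans_src q hq ▸ h)

theorem Pmm_step {q : ℕ} (hq : q < 13) {v : ℕ → ℝ} {t : ℝ}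
    (hc : ∀ c ∈ (Pmm.trans[q]'hq).constraints, t - v c.1 < c.2) :
    TStep Pmm.trans q v (Pmm.trans[q]'hq).sym t (Pmm.trans[q]'hq).dst
      (fun k => if k ∈ (Pmm.trans[q]'hq).resets then t else v k) := by
  simpa only [Pmm_trans_src] using TStep.of_mem (List.getElem_mem hq) hc

theorem Pmm_duration_lt_of_subwordOver_rho1 {u : List (ℕ × ℝ)}
    (hu : Pmm.SubwordOver [3, 4, 5, 6, 7, 8, 9, 10, 11, 12, 0] u) : duration u < 8.1 := by
  obtain ⟨_, _, hrun⟩ := hu.exists_run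
  rcases hrun with ⟨⟩ | ⟨h₃, ⟨⟩ | ⟨h₄, ⟨⟩ | ⟨h₅, ⟨⟩ | ⟨h₆, ⟨⟩ | ⟨h₇, ⟨⟩ | ⟨h₈, ⟨⟩ | ⟨h₉,
    ⟨⟩ | ⟨h₁₀, ⟨⟩ | ⟨h₁₁, ⟨⟩ | ⟨h₁₂, _ | ⟨-, ⟨⟩⟩⟩⟩⟩⟩⟩⟩⟩⟩⟩⟩
  obtain ⟨-, -, r₃⟩ := Pmm_step_inv (by norm_num) h₃
  obtain ⟨-, c₄, r₄⟩ := Pmm_step_inv (by norm_num) h₄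
  obtain ⟨-, c₅, r₅⟩ := Pmm_step_inv (by norm_num) h₅
  obtain ⟨-, c₆, r₆⟩ := Pmm_step_inv (by norm_num) h₆
  obtain ⟨-, c₇, r₇⟩ := Pmm_step_inv (by norm_num) h₇
  obtain ⟨-, c₈, r₈⟩ := Pmm_step_inv (by norm_num) h₈
  obtain ⟨-, c₉, r₉⟩ := Pmm_step_inv (by norm_num) h₉
  obtain ⟨-, c₁₀, r₁₀⟩ := Pmm_step_inv (by norm_num) h₁₀
  obtain ⟨-, c₁₁, r₁₁⟩ := Pmm_step_inv (by norm_num) h₁₁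
  obtain ⟨-, c₁₂, -⟩ := Pmm_step_inv (by norm_num) h₁₂
  simp only [Pmm, List.getElem_cons_succ, List.getElem_cons_zero, List.mem_cons, List.not_mem_nil,
    or_false, forall_eq] at r₃ c₄ r₄ c₅ r₅ c₆ r₆ c₇ r₇ c₈ r₈ c₉ r₉ c₁₀ r₁₀ c₁₁ r₁₁ c₁₂
  simp only [duration, lastTime, firstTime, List.map_cons, List.map_nil, List.headD_cons,
    List.getLastD_cons, List.getLastD_nil]
  linarith

def rho1Prefix : List (ℕ × ℝ) := [(0, -0.3), (1, -0.2), (2, -0.1)]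

/-- Each transition along `ρ₁` is taken `δ` before the deadline set by its predecessor. -/
def rho1Subword (δ : ℝ) : List (ℕ × ℝ) :=
  [(3, 0), (4, 0.2 - δ), (5, 0.5 - 2 * δ), (6, 0.8 - 3 * δ), (7, 1 - 4 * δ), (8, 1.3 - 5 * δ),
    (9, 1.6 - 6 * δ), (10, 2.6 - 7 * δ), (11, 4.1 - 8 * δ), (12, 8.1 - 9 * δ)]

theorem duration_rho1Subword (δ : ℝ) : duration (rho1Subword δ) = 8.1 - 9 * δ := by
  simp [duration, firstTime, lastTime, rho1Subword]

theorem increasing_rho1Prefix_append {δ : ℝ} (hδ : δ < 0.2) :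
    Increasing (rho1Prefix ++ rho1Subword δ) := by
  show List.IsChain (fun p q : ℕ × ℝ => p.2 < q.2) _
  simp only [rho1Prefix, rho1Subword, List.cons_append, List.nil_append,
    List.isChain_cons_cons, List.isChain_singleton, and_true]
  norm_num
  split_ands <;> linarith

theorem Pmm_run_rho1Prefix_append {δ : ℝ} (hδ : 0 < δ) :
    TRun Pmm.trans 0 (fun _ => -0.3) (rho1Prefix ++ rho1Subword δ)
      [0, 1, 2, 3, 4, 5, 6, 7, 8, 9, 10, 11, 12, 0] := by
  repeat' first
    | exact TRun.nil _ _
    | refine TRun.cons (Pmm_step (by decide) ?_) ?_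
  all_goals norm_num [Pmm] <;> linarith

theorem Pmm_subwordOver_rho1Subword {δ : ℝ} (hδ₀ : 0 < δ) (hδ : δ < 0.2) :
    Pmm.SubwordOver [3, 4, 5, 6, 7, 8, 9, 10, 11, 12, 0] (rho1Subword δ) :=
  ⟨rho1Prefix, [0, 1, 2], rfl, increasing_rho1Prefix_append hδ, Pmm_run_rho1Prefix_append hδ₀⟩

/-- For the path ρ₁ = ⟨s₃, s₄, …, s₁₂, s₀⟩, the maximum delay Δ_P(ρ₁) equals 8.1 ms:
every subword over ρ₁ has duration < 8.1, and for every ε > 0 some subword over ρ₁ has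
duration > 8.1 - ε. -/
theorem Pmm_maxDelay_rho1 :
    (∀ u, Pmm.SubwordOver [3, 4, 5, 6, 7, 8, 9, 10, 11, 12, 0] u → duration u < 8.1) ∧
    (∀ ε : ℝ, 0 < ε → ∃ u, Pmm.SubwordOver [3, 4, 5, 6, 7, 8, 9, 10, 11, 12, 0] u ∧
      8.1 - ε < duration u) := by
  refine ⟨fun _ => Pmm_duration_lt_of_subwordOver_rho1, fun ε hε => ?_⟩
  obtain ⟨δ, hδ₀, hδ, hδε⟩ : ∃ δ : ℝ, 0 < δ ∧ δ < 0.2 ∧ 9 * δ < ε :=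
    ⟨min (ε / 10) 0.1, by positivity, by norm_num, by linarith [min_le_left (ε / 10) 0.1]⟩
  refine ⟨rho1Subword δ, Pmm_subwordOver_rho1Subword hδ₀ hδ, ?_⟩
  rw [duration_rho1Subword]
  linarith
end
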